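/- The fractional parabolic maximal operator M_0 is bounded on the fractional parabolic Morrey space M^{p,λ}: for 1 < p < ∞ and 0 < λ ≤ n+2a, there is C = C(n,a,p,λ) such that ‖M_0 f‖_{M^{p,λ}} ≤ C ‖f‖_{M^{p,λ}} for all f ∈ M^{p,λ}(ℝ^{n+1}). -/

import Mathlib

/-!
The cylinders `Qcyl a r z` are the balls of the quasi-metric `pdist a`, whose volume is
`c r ^ (n + 2a)`. The Vitali covering lemma for them gives the weak type `(1, 1)` bound of the
maximal function, and the layer-cake formula turns it into the strong `(p, p)` bound. For the
Morrey bound fix a cylinder `Q = Qcyl a r z` and split `f` into its part on a fixed enlargement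
of `Q` and the rest. The first part is handled by the `L^p` bound, its `L^p` norm being controlled
by the Morrey norm on the enlarged cylinder. At points of `Q` the rest only enters through
averages over cylinders of radius larger than `r`; by Hölder and the Morrey condition those are
at most `(r ^ (-λ) ‖f‖ ^ p) ^ (1 / p)` up to a constant, which integrates over `Q` to the required
`r ^ (n + 2a - λ) ‖f‖ ^ p`.
-/

open MeasureTheory
open scoped ENNReal
open Metric Set

noncomputable section

def pdist (a : ℝ) {n : ℕ} (z w : EuclideanSpace ℝ (Fin n) × ℝ) : ℝ :=
  max (dist z.1 w.1) (|z.2 - w.2| ^ ((1 : ℝ) / (2 * a)))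

def Qcyl (a : ℝ) {n : ℕ} (r : ℝ) (z : EuclideanSpace ℝ (Fin n) × ℝ) :
    Set (EuclideanSpace ℝ (Fin n) × ℝ) :=
  {w | pdist a z w < r}

def maxOp (a α : ℝ) {n : ℕ} (f : EuclideanSpace ℝ (Fin n) × ℝ → ℝ)
    (z : EuclideanSpace ℝ (Fin n) × ℝ) : ℝ :=
  ⨆ r : {r : ℝ // 0 < r}, (r : ℝ) ^ α * ⨍ w in Qcyl a r z, |f w|

/-- The fractional parabolic Morrey norm
`‖f‖_{M^{p,λ}} = (sup_{r>0,z} r^{λ-(n+2a)} ∫_{Q_r(z)} |f|^p)^{1/p}`. -/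
def morreyNorm (a p lam : ℝ) {n : ℕ} (f : EuclideanSpace ℝ (Fin n) × ℝ → ℝ) : ℝ≥0∞ :=
  (⨆ (r : ℝ) (_ : 0 < r) (z : EuclideanSpace ℝ (Fin n) × ℝ),
      ENNReal.ofReal (r ^ (lam - ((n : ℝ) + 2 * a))) *
        ∫⁻ w in Qcyl a r z, ENNReal.ofReal (|f w| ^ p)) ^ (1 / p)

section Averages

variable {α : Type*} [MeasurableSpace α] {μ : Measure α}

lemma ofReal_average_le_laverage {f : α → ℝ} (hf : ∀ x, 0 ≤ f x) :
    ENNReal.ofReal (⨍ x, f x ∂μ) ≤ ⨍⁻ x, ENNReal.ofReal (f x) ∂μ := by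
  by_cases hint : Integrable f ((μ univ)⁻¹ • μ)
  · exact (ofReal_integral_eq_lintegral_ofReal hint (ae_of_all _ hf)).le
  · rw [average_eq', integral_undef hint, ENNReal.ofReal_zero]
    exact zero_le

lemma laverage_add_left {f g : α → ℝ≥0∞} (hf : Measurable f) :
    ⨍⁻ x, f x + g x ∂μ = ⨍⁻ x, f x ∂μ + ⨍⁻ x, g x ∂μ :=
  lintegral_add_left hf g

lemma laverage_le_rpow_laverage_rpow {f : α → ℝ≥0∞} (hf : AEMeasurable f μ) {p : ℝ} (hp : 1 < p)
    (hμ : μ univ ≠ 0) (hμ' : μ univ ≠ ∞) :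
    ⨍⁻ x, f x ∂μ ≤ (⨍⁻ x, f x ^ p ∂μ) ^ (1 / p) := by
  have hν : ((μ univ)⁻¹ • μ) univ = 1 := by
    rw [Measure.smul_apply, smul_eq_mul, ENNReal.inv_mul_cancel hμ hμ']
  simpa [laverage_eq', hν] using ENNReal.lintegral_mul_le_Lp_mul_Lq ((μ univ)⁻¹ • μ)
    (Real.HolderConjugate.conjExponent hp) (hf.smul_measure _)
    (aemeasurable_const (b := (1 : ℝ≥0∞)))

end Averages

section LayerCake

variable {α : Type*} [MeasurableSpace α] {μ : Measure α}

lemma lintegral_Ioo_ofReal_mul_rpow_sub_one {s T : ℝ} (hs : 0 < s) (hT : 0 < T) :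
    ∫⁻ t in Ioo 0 T, ENNReal.ofReal (s * t ^ (s - 1)) = ENNReal.ofReal (T ^ s) := by
  have hint : IntervalIntegrable (fun t : ℝ => s * t ^ (s - 1)) volume 0 T :=
    (intervalIntegral.intervalIntegrable_rpow' (by linarith)).const_mul s
  have hnonneg : 0 ≤ᵐ[volume.restrict (Ioc 0 T)] fun t => s * t ^ (s - 1) :=
    (ae_restrict_mem measurableSet_Ioc).mono fun t ht =>
      mul_nonneg hs.le (Real.rpow_nonneg ht.1.le _)
  rw [Measure.restrict_congr_set Ioo_ae_eq_Ioc, ← ofReal_integral_eq_lintegral_ofReal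
    ((intervalIntegrable_iff_integrableOn_Ioc_of_le hT.le).1 hint) hnonneg,
    ← intervalIntegral.integral_of_le hT.le,
    intervalIntegral.integral_const_mul, integral_rpow (.inl (by linarith)), sub_add_cancel,
    Real.zero_rpow hs.ne', sub_zero, mul_div_cancel₀ _ hs.ne']

lemma rpow_eq_lintegral_indicator {s : ℝ} (hs : 0 < s) (c : ℝ≥0∞) :
    c ^ s = ∫⁻ t in Ioi 0,
      {t : ℝ | ENNReal.ofReal t < c}.indicator (fun t => ENNReal.ofReal (s * t ^ (s - 1))) t := by
  rcases eq_or_ne c ∞ with rfl | hc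
  · simp only [ENNReal.ofReal_lt_top, ofPred_true, indicator_univ, ENNReal.top_rpow_of_pos hs]
    refine (ENNReal.eq_top_of_forall_nnreal_le fun r => ?_).symm
    have hT : 0 < ((r : ℝ) + 1) ^ s⁻¹ := by positivity
    calc (r : ℝ≥0∞) ≤ ENNReal.ofReal ((((r : ℝ) + 1) ^ s⁻¹) ^ s) := by
          rw [Real.rpow_inv_rpow (by positivity) hs.ne',
            ENNReal.ofReal_add (by positivity) zero_le_one, ENNReal.ofReal_coe_nnreal]
          exact le_self_add
      _ = ∫⁻ t in Ioo 0 (((r : ℝ) + 1) ^ s⁻¹), ENNReal.ofReal (s * t ^ (s - 1)) :=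
          (lintegral_Ioo_ofReal_mul_rpow_sub_one hs hT).symm
      _ ≤ _ := lintegral_mono_set Ioo_subset_Ioi_self
  obtain ⟨T, hT, rfl⟩ : ∃ T, 0 ≤ T ∧ c = ENNReal.ofReal T :=
    ⟨c.toReal, ENNReal.toReal_nonneg, (ENNReal.ofReal_toReal hc).symm⟩
  rcases hT.eq_or_lt with rfl | hT
  · simp [ENNReal.zero_rpow_of_pos hs]
  have hset : {t : ℝ | ENNReal.ofReal t < ENNReal.ofReal T} = Iio T :=
    ext fun t => ENNReal.ofReal_lt_ofReal_iff hT
  rw [hset, lintegral_indicator measurableSet_Iio, Measure.restrict_restrict measurableSet_Iio,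
    Iio_inter_Ioi, lintegral_Ioo_ofReal_mul_rpow_sub_one hs hT, ENNReal.ofReal_rpow_of_pos hT]

lemma lintegral_rpow_eq_lintegral_meas_ofReal_lt_mul [SFinite μ] {h : α → ℝ≥0∞}
    (hh : Measurable h) {s : ℝ} (hs : 0 < s) :
    ∫⁻ x, h x ^ s ∂μ =
      ∫⁻ t in Ioi 0, ENNReal.ofReal (s * t ^ (s - 1)) * μ {x | ENNReal.ofReal t < h x} := by
  have hmeas : Measurable fun q : α × ℝ => {t : ℝ | ENNReal.ofReal t < h q.1}.indicator
      (fun t => ENNReal.ofReal (s * t ^ (s - 1))) q.2 :=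
    (by fun_prop : Measurable fun q : α × ℝ => ENNReal.ofReal (s * q.2 ^ (s - 1))).indicator
      (measurableSet_lt (by fun_prop) (hh.comp measurable_fst))
  simp_rw [rpow_eq_lintegral_indicator hs (h _)]
  rw [lintegral_lintegral_swap hmeas.aemeasurable]
  refine setLIntegral_congr_fun measurableSet_Ioi fun t _ => ?_
  simp_rw [← lintegral_indicator_const (measurableSet_lt measurable_const hh), indicator_apply,
    mem_ofPred_eq]

lemma ofReal_mul_rpow_sub_one_mul_inv {p t : ℝ} (hp : 1 < p) (ht : 0 < t) :
    ENNReal.ofReal (p * t ^ (p - 1)) * (ENNReal.ofReal t)⁻¹ =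
      ENNReal.ofReal (p / (p - 1)) * ENNReal.ofReal ((p - 1) * t ^ (p - 1 - 1)) := by
  have hp' : p - 1 ≠ 0 := by linarith
  rw [← ENNReal.ofReal_inv_of_pos ht, ← ENNReal.ofReal_mul (by positivity),
    ← ENNReal.ofReal_mul (by positivity), Real.rpow_sub ht (p - 1), Real.rpow_one]
  congr 1
  field_simp

lemma lintegral_indicator_lt_two_mul_mul {p : ℝ} (hp : 1 < p) (c : ℝ≥0∞) :
    ∫⁻ t in Ioi 0, {t : ℝ | ENNReal.ofReal t < 2 * c}.indicator
      (fun t => ENNReal.ofReal ((p - 1) * t ^ (p - 1 - 1))) t * c = 2 ^ (p - 1) * c ^ p := by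
  have hp₀ : 0 < p - 1 := by linarith
  have hpow : c ^ p = c ^ (p - 1) * c := by
    conv_lhs => rw [← sub_add_cancel p 1]
    rw [ENNReal.rpow_add_of_nonneg _ _ hp₀.le zero_le_one, ENNReal.rpow_one]
  rw [lintegral_mul_const _ ((by fun_prop : Measurable fun t : ℝ =>
      ENNReal.ofReal ((p - 1) * t ^ (p - 1 - 1))).indicator
      (measurableSet_lt ENNReal.measurable_ofReal measurable_const)),
    ← rpow_eq_lintegral_indicator hp₀, ENNReal.mul_rpow_of_nonneg _ _ hp₀.le, mul_assoc, hpow]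

/-- The layer-cake half of the Marcinkiewicz interpolation argument. -/
theorem lintegral_rpow_le_of_meas_lt_le [SFinite μ] {h g : α → ℝ≥0∞} (hh : Measurable h)
    (hg : Measurable g) {A : ℝ≥0∞} {p : ℝ} (hp : 1 < p)
    (hA : ∀ t : ℝ, 0 < t → μ {x | ENNReal.ofReal t < h x} ≤
      A * (ENNReal.ofReal t)⁻¹ * ∫⁻ x in {x | ENNReal.ofReal t < 2 * g x}, g x ∂μ) :
    ∫⁻ x, h x ^ p ∂μ ≤ 2 ^ (p - 1) * A * ENNReal.ofReal (p / (p - 1)) * ∫⁻ x, g x ^ p ∂μ := by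
  set Φ : ℝ → α → ℝ≥0∞ := fun t x => {t : ℝ | ENNReal.ofReal t < 2 * g x}.indicator
    (fun t => ENNReal.ofReal ((p - 1) * t ^ (p - 1 - 1))) t * g x
  have hΦ : Measurable (Function.uncurry Φ) :=
    ((by fun_prop : Measurable fun q : ℝ × α =>
        ENNReal.ofReal ((p - 1) * q.1 ^ (p - 1 - 1))).indicator
      (measurableSet_lt (by fun_prop) ((hg.comp measurable_snd).const_mul 2))).mul
      (hg.comp measurable_snd)
  have hΦ_x : ∀ t, ∫⁻ x, Φ t x ∂μ = ENNReal.ofReal ((p - 1) * t ^ (p - 1 - 1)) *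
      ∫⁻ x in {x | ENNReal.ofReal t < 2 * g x}, g x ∂μ := fun t => by
    have hE : MeasurableSet {x | ENNReal.ofReal t < 2 * g x} :=
      measurableSet_lt measurable_const (hg.const_mul 2)
    rw [← lintegral_indicator hE, ← lintegral_const_mul _ (hg.indicator hE)]
    refine lintegral_congr fun x => ?_
    by_cases hx : ENNReal.ofReal t < 2 * g x <;> simp [Φ, indicator_apply, hx]
  have hΦ_t : ∀ x, ∫⁻ t in Ioi 0, Φ t x = 2 ^ (p - 1) * g x ^ p := fun x =>
    lintegral_indicator_lt_two_mul_mul hp (g x)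
  calc ∫⁻ x, h x ^ p ∂μ
      = ∫⁻ t in Ioi 0, ENNReal.ofReal (p * t ^ (p - 1)) * μ {x | ENNReal.ofReal t < h x} :=
        lintegral_rpow_eq_lintegral_meas_ofReal_lt_mul hh (by linarith)
    _ ≤ ∫⁻ t in Ioi 0, A * ENNReal.ofReal (p / (p - 1)) * ∫⁻ x, Φ t x ∂μ := by
        refine setLIntegral_mono' measurableSet_Ioi fun t (ht : 0 < t) => ?_
        calc _ ≤ ENNReal.ofReal (p * t ^ (p - 1)) * (A * (ENNReal.ofReal t)⁻¹ *
                ∫⁻ x in {x | ENNReal.ofReal t < 2 * g x}, g x ∂μ) := by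
              gcongr
              exact hA t ht
          _ = _ := by
              rw [hΦ_x, mul_comm A, mul_assoc, ← mul_assoc, ofReal_mul_rpow_sub_one_mul_inv hp ht]
              ring
    _ = A * ENNReal.ofReal (p / (p - 1)) * ∫⁻ x, (∫⁻ t in Ioi 0, Φ t x) ∂μ := by
        have hm : Measurable fun t => ∫⁻ x, Φ t x ∂μ := hΦ.lintegral_prod_right'
        rw [lintegral_const_mul _ hm, lintegral_lintegral_swap hΦ.aemeasurable]
    _ = 2 ^ (p - 1) * A * ENNReal.ofReal (p / (p - 1)) * ∫⁻ x, g x ^ p ∂μ := by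
        simp_rw [hΦ_t]
        rw [lintegral_const_mul _ (hg.pow_const p)]
        ring

end LayerCake

section Cylinders

variable {n : ℕ} {a : ℝ}

lemma pdist_comm (z w : EuclideanSpace ℝ (Fin n) × ℝ) : pdist a z w = pdist a w z := by
  simp only [pdist, dist_comm, abs_sub_comm]

lemma pdist_self (ha : 0 < a) (z : EuclideanSpace ℝ (Fin n) × ℝ) : pdist a z z = 0 := by
  rw [pdist, dist_self, sub_self, abs_zero, Real.zero_rpow (by positivity), max_self]

lemma pdist_nonneg (z w : EuclideanSpace ℝ (Fin n) × ℝ) : 0 ≤ pdist a z w :=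
  le_max_of_le_left dist_nonneg

lemma continuous_pdist (ha : 0 < a) :
    Continuous fun p : (EuclideanSpace ℝ (Fin n) × ℝ) × (EuclideanSpace ℝ (Fin n) × ℝ) =>
      pdist a p.1 p.2 :=
  (continuous_fst.fst.dist continuous_snd.fst).max
    ((continuous_fst.snd.sub continuous_snd.snd).abs.rpow_const fun _ => Or.inr (by positivity))

lemma pdist_le_mul_add (ha : 0 < a) (z w u : EuclideanSpace ℝ (Fin n) × ℝ) :
    pdist a z u ≤ 2 ^ (1 / (2 * a)) * (pdist a z w + pdist a w u) := by
  have hK : 1 ≤ (2 : ℝ) ^ (1 / (2 * a)) := Real.one_le_rpow one_le_two (by positivity)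
  have h₁ : 0 ≤ pdist a z w := pdist_nonneg z w
  have h₂ : 0 ≤ pdist a w u := pdist_nonneg w u
  have htime : ∀ x y : EuclideanSpace ℝ (Fin n) × ℝ, |x.2 - y.2| ≤ pdist a x y ^ (2 * a) :=
    fun x y => (Real.rpow_inv_le_iff_of_pos (abs_nonneg _) (pdist_nonneg x y)
      (by positivity)).1 (by rw [← one_div]; exact le_max_right _ _)
  refine max_le ?_ ?_
  · calc dist z.1 u.1 ≤ dist z.1 w.1 + dist w.1 u.1 := dist_triangle _ _ _
      _ ≤ pdist a z w + pdist a w u := add_le_add (le_max_left _ _) (le_max_left _ _)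
      _ ≤ _ := le_mul_of_one_le_left (by positivity) hK
  -- `|z.2 - u.2| ≤ pdist z w ^ (2a) + pdist w u ^ (2a) ≤ 2 (pdist z w + pdist w u) ^ (2a)`
  · rw [one_div, Real.rpow_inv_le_iff_of_pos (abs_nonneg _) (by positivity) (by positivity),
      Real.mul_rpow (by positivity) (by positivity), ← Real.rpow_mul zero_le_two,
      inv_mul_cancel₀ (by positivity), Real.rpow_one, two_mul]
    have hzw := Real.rpow_le_rpow h₁ (le_add_of_nonneg_right h₂) (by positivity : (0:ℝ) ≤ 2 * a)
    have hwu := Real.rpow_le_rpow h₂ (le_add_of_nonneg_left h₁) (by positivity : (0:ℝ) ≤ 2 * a)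
    linarith [abs_sub_le z.2 w.2 u.2, htime z w, htime w u]

lemma mem_Qcyl_comm {r : ℝ} {z w : EuclideanSpace ℝ (Fin n) × ℝ} :
    w ∈ Qcyl a r z ↔ z ∈ Qcyl a r w := by
  simp only [Qcyl, Set.mem_ofPred_eq, pdist_comm z w]

lemma self_mem_Qcyl (ha : 0 < a) {r : ℝ} (hr : 0 < r) (z : EuclideanSpace ℝ (Fin n) × ℝ) :
    z ∈ Qcyl a r z := by
  simpa [Qcyl, pdist_self ha] using hr

lemma Qcyl_mono {r r' : ℝ} (h : r ≤ r') (z : EuclideanSpace ℝ (Fin n) × ℝ) :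
    Qcyl a r z ⊆ Qcyl a r' z :=
  fun _ hw => lt_of_lt_of_le hw h

lemma isOpen_Qcyl (ha : 0 < a) (r : ℝ) (z : EuclideanSpace ℝ (Fin n) × ℝ) :
    IsOpen (Qcyl a r z) := by
  have h := (continuous_pdist (n := n) ha).comp (Continuous.prodMk_right z)
  exact isOpen_lt h continuous_const

lemma measurableSet_Qcyl (ha : 0 < a) (r : ℝ) (z : EuclideanSpace ℝ (Fin n) × ℝ) :
    MeasurableSet (Qcyl a r z) :=
  (isOpen_Qcyl ha r z).measurableSet

lemma Qcyl_eq_prod (ha : 0 < a) {r : ℝ} (hr : 0 < r) (z : EuclideanSpace ℝ (Fin n) × ℝ) :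
    Qcyl a r z = ball z.1 r ×ˢ ball z.2 (r ^ (2 * a)) := by
  ext w
  rw [Qcyl, Set.mem_ofPred_eq, pdist, max_lt_iff, one_div, Real.rpow_inv_lt_iff_of_pos
    (abs_nonneg _) hr.le (by positivity), mem_prod, mem_ball, mem_ball, dist_comm,
    Real.dist_eq, abs_sub_comm]

lemma Qcyl_subset_Qcyl_of_mem (ha : 0 < a) {r ρ : ℝ} {z w : EuclideanSpace ℝ (Fin n) × ℝ}
    (hw : w ∈ Qcyl a r z) : Qcyl a ρ w ⊆ Qcyl a (2 ^ (1 / (2 * a)) * (r + ρ)) z :=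
  fun u hu => (pdist_le_mul_add ha z w u).trans_lt
    (mul_lt_mul_of_pos_left (add_lt_add hw hu) (by positivity))

/-- The enlargement factor produced by two applications of the quasi-triangle inequality
`pdist_le_mul_add` in `Qcyl_subset_Qcyl_of_inter_nonempty`. -/
def vitaliConst (a : ℝ) : ℝ := 2 ^ (1 / (2 * a)) * (1 + 4 * 2 ^ (1 / (2 * a)))

lemma vitaliConst_pos (a : ℝ) : 0 < vitaliConst a := by
  unfold vitaliConst; positivity

lemma Qcyl_subset_Qcyl_of_inter_nonempty (ha : 0 < a) {r r' : ℝ} (hrr' : r ≤ 2 * r')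
    {z z' : EuclideanSpace ℝ (Fin n) × ℝ} (h : (Qcyl a r z ∩ Qcyl a r' z').Nonempty) :
    Qcyl a r z ⊆ Qcyl a (vitaliConst a * r') z' := by
  obtain ⟨u, huz, huz'⟩ := h
  set K : ℝ := 2 ^ (1 / (2 * a))
  have hK : 0 < K := by positivity
  intro v hv
  have huv : pdist a u v < K * (r + r) :=
    (pdist_le_mul_add ha u z v).trans_lt
      (mul_lt_mul_of_pos_left (add_lt_add (mem_Qcyl_comm.1 huz) hv) hK)
  calc pdist a z' v ≤ K * (pdist a z' u + pdist a u v) := pdist_le_mul_add ha z' u v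
    _ < K * (r' + K * (r + r)) := mul_lt_mul_of_pos_left (add_lt_add huz' huv) hK
    _ ≤ vitaliConst a * r' := by
      rw [vitaliConst, mul_assoc]
      exact mul_le_mul_of_nonneg_left (by nlinarith) hK.le

lemma exists_countable_pairwiseDisjoint_Qcyl_cover (ha : 0 < a)
    {s : Set (EuclideanSpace ℝ (Fin n) × ℝ)} {ρ : EuclideanSpace ℝ (Fin n) × ℝ → ℝ} {R : ℝ}
    (hρ : ∀ z ∈ s, 0 < ρ z) (hR : ∀ z ∈ s, ρ z ≤ R) :
    ∃ u ⊆ s, u.Countable ∧ u.PairwiseDisjoint (fun z => Qcyl a (ρ z) z) ∧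
      s ⊆ ⋃ z ∈ u, Qcyl a (vitaliConst a * ρ z) z := by
  obtain ⟨u, hus, hdisj, hcover⟩ := Vitali.exists_disjoint_subfamily_covering_enlargement
    (fun z => Qcyl a (ρ z) z) s ρ 2 one_lt_two (fun z hz => (hρ z hz).le) R hR
    (fun z hz => ⟨z, self_mem_Qcyl ha (hρ z hz) z⟩)
  refine ⟨u, hus, hdisj.countable_of_isOpen (fun z _ => isOpen_Qcyl ha _ z)
    (fun z hz => ⟨z, self_mem_Qcyl ha (hρ z (hus hz)) z⟩), hdisj, fun z hz => ?_⟩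
  obtain ⟨b, hbu, hinter, hle⟩ := hcover z hz
  exact mem_biUnion hbu
    (Qcyl_subset_Qcyl_of_inter_nonempty ha hle hinter (self_mem_Qcyl ha (hρ z hz) z))

lemma volume_Qcyl (ha : 0 < a) {r : ℝ} (hr : 0 < r) (z : EuclideanSpace ℝ (Fin n) × ℝ) :
    volume (Qcyl a r z) = ENNReal.ofReal (r ^ ((n : ℝ) + 2 * a)) *
      volume (Qcyl a 1 (0 : EuclideanSpace ℝ (Fin n) × ℝ)) := by
  rw [Qcyl_eq_prod ha hr, Qcyl_eq_prod ha one_pos, Measure.volume_eq_prod, Measure.prod_prod,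
    Measure.prod_prod, Measure.addHaar_ball_of_pos _ _ hr, finrank_euclideanSpace_fin,
    Real.volume_ball, Real.volume_ball, Real.one_rpow, mul_one, Real.rpow_add hr,
    Real.rpow_natCast, ENNReal.ofReal_mul zero_le_two, ENNReal.ofReal_mul (by positivity),
    Prod.fst_zero]
  ring

lemma volume_Qcyl_ne_zero (ha : 0 < a) {r : ℝ} (hr : 0 < r) (z : EuclideanSpace ℝ (Fin n) × ℝ) :
    volume (Qcyl a r z) ≠ 0 :=
  (isOpen_Qcyl ha r z).measure_ne_zero volume ⟨z, self_mem_Qcyl ha hr z⟩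

lemma volume_Qcyl_ne_top (ha : 0 < a) {r : ℝ} (hr : 0 < r) (z : EuclideanSpace ℝ (Fin n) × ℝ) :
    volume (Qcyl a r z) ≠ ∞ := by
  rw [Qcyl_eq_prod ha hr]
  exact (isBounded_ball.prod isBounded_ball).measure_lt_top.ne

lemma volume_Qcyl_mul (ha : 0 < a) {c r : ℝ} (hc : 0 < c) (hr : 0 < r)
    (z : EuclideanSpace ℝ (Fin n) × ℝ) :
    volume (Qcyl a (c * r) z) = ENNReal.ofReal (c ^ ((n : ℝ) + 2 * a)) * volume (Qcyl a r z) := by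
  rw [volume_Qcyl ha (mul_pos hc hr), volume_Qcyl ha hr, Real.mul_rpow hc.le hr.le,
    ENNReal.ofReal_mul (by positivity), mul_assoc]

end Cylinders

section Maximal

variable {n : ℕ} {a : ℝ}

/-- Rational radii make the maximal function measurable; by `setLAverage_Qcyl_le_cylMaximal`
this costs only a doubling factor against all real radii. -/
def cylMaximal (a : ℝ) {n : ℕ} (g : EuclideanSpace ℝ (Fin n) × ℝ → ℝ≥0∞)
    (z : EuclideanSpace ℝ (Fin n) × ℝ) : ℝ≥0∞ :=
  ⨆ (q : ℚ) (_ : 0 < q), ⨍⁻ w in Qcyl a q z, g w ∂volume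

lemma setLAverage_le_cylMaximal {q : ℚ} (hq : 0 < q) (g : EuclideanSpace ℝ (Fin n) × ℝ → ℝ≥0∞)
    (z : EuclideanSpace ℝ (Fin n) × ℝ) :
    ⨍⁻ w in Qcyl a q z, g w ∂volume ≤ cylMaximal a g z :=
  le_iSup₂ (f := fun (q : ℚ) (_ : 0 < q) => ⨍⁻ w in Qcyl a q z, g w ∂volume) q hq

lemma measurable_setLAverage_Qcyl (ha : 0 < a) {r : ℝ} (hr : 0 < r)
    {g : EuclideanSpace ℝ (Fin n) × ℝ → ℝ≥0∞} (hg : Measurable g) :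
    Measurable fun z => ⨍⁻ w in Qcyl a r z, g w ∂volume := by
  simp_rw [setLAverage_eq, volume_Qcyl ha hr, ← lintegral_indicator (measurableSet_Qcyl ha r _)]
  refine Measurable.div_const ?_ _
  have hS := measurableSet_lt (continuous_pdist (n := n) ha).measurable
    (measurable_const (a := r))
  exact ((hg.comp measurable_snd).indicator hS).lintegral_prod_right'

lemma measurable_cylMaximal (ha : 0 < a) {g : EuclideanSpace ℝ (Fin n) × ℝ → ℝ≥0∞}
    (hg : Measurable g) : Measurable (cylMaximal a g) :=
  .iSup fun _ => .iSup fun hq => measurable_setLAverage_Qcyl ha (Rat.cast_pos.2 hq) hg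

lemma setLAverage_Qcyl_le_cylMaximal (ha : 0 < a) {r : ℝ} (hr : 0 < r)
    (g : EuclideanSpace ℝ (Fin n) × ℝ → ℝ≥0∞) (z : EuclideanSpace ℝ (Fin n) × ℝ) :
    ⨍⁻ w in Qcyl a r z, g w ∂volume ≤
      ENNReal.ofReal (2 ^ ((n : ℝ) + 2 * a)) * cylMaximal a g z := by
  obtain ⟨q, hrq, hq2⟩ := exists_rat_btwn (lt_two_mul_self hr)
  have hq : (0 : ℝ) < q := hr.trans hrq
  set c := ENNReal.ofReal (2 ^ ((n : ℝ) + 2 * a))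
  have hc : c ≠ 0 := by positivity
  have hvol : volume (Qcyl a q z) ≤ c * volume (Qcyl a r z) := by
    rw [← volume_Qcyl_mul ha two_pos hr]
    exact measure_mono (Qcyl_mono hq2.le z)
  calc ⨍⁻ w in Qcyl a r z, g w ∂volume
        = c * (∫⁻ w in Qcyl a r z, g w) / (c * volume (Qcyl a r z)) := by
        rw [setLAverage_eq, ENNReal.mul_div_mul_left _ _ hc ENNReal.ofReal_ne_top]
    _ ≤ c * (∫⁻ w in Qcyl a q z, g w) / volume (Qcyl a q z) := by
        gcongr
        exact Qcyl_mono hrq.le z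
    _ = c * ⨍⁻ w in Qcyl a q z, g w ∂volume := by rw [setLAverage_eq, mul_div_assoc]
    _ ≤ c * cylMaximal a g z := by gcongr; exact setLAverage_le_cylMaximal (Rat.cast_pos.1 hq) g z

lemma cylMaximal_mono {g g' : EuclideanSpace ℝ (Fin n) × ℝ → ℝ≥0∞} (h : g ≤ g') :
    cylMaximal a g ≤ cylMaximal a g' :=
  fun _ => iSup₂_mono fun _ _ => laverage_mono_ae (ae_of_all _ h)

lemma cylMaximal_add_le {g₁ : EuclideanSpace ℝ (Fin n) × ℝ → ℝ≥0∞} (hg₁ : Measurable g₁)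
    (g₂ : EuclideanSpace ℝ (Fin n) × ℝ → ℝ≥0∞) (z : EuclideanSpace ℝ (Fin n) × ℝ) :
    cylMaximal a (g₁ + g₂) z ≤ cylMaximal a g₁ z + cylMaximal a g₂ z :=
  iSup₂_le fun _ hq => (laverage_add_left hg₁).trans_le <|
    add_le_add (setLAverage_le_cylMaximal hq g₁ z) (setLAverage_le_cylMaximal hq g₂ z)

lemma cylMaximal_const (ha : 0 < a) (c : ℝ≥0∞) (z : EuclideanSpace ℝ (Fin n) × ℝ) :
    cylMaximal a (fun _ => c) z ≤ c :=
  iSup₂_le fun _ hq => (setLAverage_const (volume_Qcyl_ne_zero ha (Rat.cast_pos.2 hq) z)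
    (volume_Qcyl_ne_top ha (Rat.cast_pos.2 hq) z) c).le

lemma maxOp_nonneg (a α : ℝ) (f : EuclideanSpace ℝ (Fin n) × ℝ → ℝ)
    (z : EuclideanSpace ℝ (Fin n) × ℝ) : 0 ≤ maxOp a α f z :=
  Real.iSup_nonneg fun r => mul_nonneg (Real.rpow_nonneg r.2.le α)
    (integral_nonneg fun _ => abs_nonneg _)

lemma ofReal_maxOp_le (ha : 0 < a) (f : EuclideanSpace ℝ (Fin n) × ℝ → ℝ)
    (z : EuclideanSpace ℝ (Fin n) × ℝ) :
    ENNReal.ofReal (maxOp a 0 f z) ≤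
      ENNReal.ofReal (2 ^ ((n : ℝ) + 2 * a)) * cylMaximal a (fun w => ENNReal.ofReal |f w|) z := by
  set R := ENNReal.ofReal (2 ^ ((n : ℝ) + 2 * a)) * cylMaximal a (fun w => ENNReal.ofReal |f w|) z
  rcases eq_or_ne R ∞ with hR | hR
  · exact hR ▸ le_top
  refine ENNReal.ofReal_le_of_le_toReal (Real.iSup_le (fun ⟨r, hr⟩ => ?_) ENNReal.toReal_nonneg)
  rw [Real.rpow_zero, one_mul]
  exact (ENNReal.ofReal_le_iff_le_toReal hR).1
    ((ofReal_average_le_laverage fun w => abs_nonneg _).trans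
      (setLAverage_Qcyl_le_cylMaximal ha hr _ z))

lemma exists_mul_volume_le_of_lt_cylMaximal {g : EuclideanSpace ℝ (Fin n) × ℝ → ℝ≥0∞}
    {t : ℝ≥0∞} {z : EuclideanSpace ℝ (Fin n) × ℝ} (ha : 0 < a) (h : t < cylMaximal a g z) :
    ∃ r, 0 < r ∧ t * volume (Qcyl a r z) ≤ ∫⁻ w in Qcyl a r z, g w := by
  obtain ⟨q, hq, hlt⟩ : ∃ q : ℚ, ∃ _ : 0 < q, t < ⨍⁻ w in Qcyl a q z, g w ∂volume := by
    simpa only [cylMaximal, lt_iSup_iff] using h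
  have hq' : (0 : ℝ) < q := Rat.cast_pos.2 hq
  rw [setLAverage_eq] at hlt
  exact ⟨q, hq', (ENNReal.le_div_iff_mul_le (.inl (volume_Qcyl_ne_zero ha hq' z))
    (.inl (volume_Qcyl_ne_top ha hq' z))).1 hlt.le⟩

lemma exists_radius_le_of_mul_volume_Qcyl_le (ha : 0 < a) {t T : ℝ≥0∞} (ht : t ≠ 0) (hT : T ≠ ∞) :
    ∃ R, ∀ r, 0 < r → ∀ z : EuclideanSpace ℝ (Fin n) × ℝ,
      t * volume (Qcyl a r z) ≤ T → r ≤ R := by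
  have hc : t * volume (Qcyl a 1 (0 : EuclideanSpace ℝ (Fin n) × ℝ)) ≠ 0 :=
    mul_ne_zero ht (volume_Qcyl_ne_zero ha one_pos 0)
  have hd : 0 < (n : ℝ) + 2 * a := by positivity
  refine ⟨(T / (t * volume (Qcyl a 1 (0 : EuclideanSpace ℝ (Fin n) × ℝ)))).toReal ^
    ((n : ℝ) + 2 * a)⁻¹, fun r hr z hrT => ?_⟩
  rw [volume_Qcyl ha hr, mul_left_comm, ← ENNReal.le_div_iff_mul_le (.inl hc) (.inr hT),
    ENNReal.ofReal_le_iff_le_toReal (ENNReal.div_ne_top hT hc)] at hrT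
  exact (Real.le_rpow_inv_iff_of_pos hr.le ENNReal.toReal_nonneg hd).2 hrT

theorem volume_lt_cylMaximal_le (ha : 0 < a) (g : EuclideanSpace ℝ (Fin n) × ℝ → ℝ≥0∞)
    {t : ℝ≥0∞} (ht : t ≠ 0) (ht' : t ≠ ∞) :
    volume {z | t < cylMaximal a g z} ≤
      ENNReal.ofReal (vitaliConst a ^ ((n : ℝ) + 2 * a)) * t⁻¹ * ∫⁻ w, g w := by
  set C := ENNReal.ofReal (vitaliConst a ^ ((n : ℝ) + 2 * a))
  rcases eq_or_ne (∫⁻ w, g w) ∞ with hT | hT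
  · have : C * t⁻¹ ≠ 0 := mul_ne_zero (by simp [C, vitaliConst_pos a, Real.rpow_pos_of_pos])
      (ENNReal.inv_ne_zero.2 ht')
    rw [hT, ENNReal.mul_top this]
    exact le_top
  choose! ρ hρ₀ hρ using fun z (hz : t < cylMaximal a g z) =>
    exists_mul_volume_le_of_lt_cylMaximal ha hz
  obtain ⟨R, hR⟩ := exists_radius_le_of_mul_volume_Qcyl_le (n := n) ha ht hT
  obtain ⟨u, hus, hu, hdisj, hcover⟩ := exists_countable_pairwiseDisjoint_Qcyl_cover
    (s := {z | t < cylMaximal a g z}) ha hρ₀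
    fun z hz => hR _ (hρ₀ z hz) z ((hρ z hz).trans (setLIntegral_le_lintegral _ _))
  calc volume {z | t < cylMaximal a g z}
      ≤ volume (⋃ z ∈ u, Qcyl a (vitaliConst a * ρ z) z) := measure_mono hcover
    _ ≤ ∑' z : u, volume (Qcyl a (vitaliConst a * ρ z) (z : EuclideanSpace ℝ (Fin n) × ℝ)) :=
        measure_biUnion_le _ hu _
    _ = ∑' z : u, C * volume (Qcyl a (ρ z) (z : EuclideanSpace ℝ (Fin n) × ℝ)) :=
        tsum_congr fun z => by rw [volume_Qcyl_mul ha (vitaliConst_pos a) (hρ₀ z (hus z.2))]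
    _ ≤ ∑' z : u, C * (t⁻¹ * ∫⁻ w in Qcyl a (ρ z) (z : EuclideanSpace ℝ (Fin n) × ℝ), g w) :=
        ENNReal.tsum_le_tsum fun z => by
          gcongr
          exact (ENNReal.mul_le_iff_le_inv ht ht').1 (hρ z (hus z.2))
    _ = C * t⁻¹ * ∫⁻ w in ⋃ z ∈ u, Qcyl a (ρ z) z, g w := by
        rw [lintegral_biUnion hu (fun z _ => measurableSet_Qcyl ha _ z) hdisj,
          ENNReal.tsum_mul_left, ENNReal.tsum_mul_left, mul_assoc]
    _ ≤ C * t⁻¹ * ∫⁻ w, g w := by gcongr; exact Measure.restrict_le_self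

lemma volume_lt_cylMaximal_le_setLIntegral (ha : 0 < a) {g : EuclideanSpace ℝ (Fin n) × ℝ → ℝ≥0∞}
    (hg : Measurable g) {t : ℝ≥0∞} (ht : t ≠ 0) (ht' : t ≠ ∞) :
    volume {z | t < cylMaximal a g z} ≤ 2 * ENNReal.ofReal (vitaliConst a ^ ((n : ℝ) + 2 * a)) *
      t⁻¹ * ∫⁻ w in {w | t < 2 * g w}, g w := by
  have hE : MeasurableSet {w | t < 2 * g w} := measurableSet_lt measurable_const (hg.const_mul 2)
  set g₁ := {w | t < 2 * g w}.indicator g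
  have hsplit : g ≤ g₁ + fun _ => t / 2 := fun w => by
    by_cases hw : t < 2 * g w
    · simp [g₁, hw]
    · rw [Pi.add_apply, show g₁ w = 0 from indicator_of_notMem (s := {w | t < 2 * g w}) hw g,
        zero_add, ENNReal.le_div_iff_mul_le (.inl two_ne_zero) (.inl ENNReal.ofNat_ne_top),
        mul_comm]
      exact not_lt.1 hw
  have hsub : {z | t < cylMaximal a g z} ⊆ {z | t / 2 < cylMaximal a g₁ z} := fun z hz => by
    by_contra hle
    have := (cylMaximal_mono hsplit z).trans ((cylMaximal_add_le (hg.indicator hE) _ z).trans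
      (add_le_add (not_lt.1 hle) (cylMaximal_const ha _ z)))
    exact (ENNReal.add_halves t ▸ this).not_gt hz
  calc volume {z | t < cylMaximal a g z} ≤ volume {z | t / 2 < cylMaximal a g₁ z} :=
        measure_mono hsub
    _ ≤ ENNReal.ofReal (vitaliConst a ^ ((n : ℝ) + 2 * a)) * (t / 2)⁻¹ * ∫⁻ w, g₁ w :=
        volume_lt_cylMaximal_le ha g₁ (ENNReal.half_pos ht).ne' (ENNReal.div_ne_top ht' two_ne_zero)
    _ = _ := by
        rw [lintegral_indicator hE, ENNReal.inv_div (.inr ht') (.inr ht), ENNReal.div_eq_inv_mul]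
        ring

theorem lintegral_cylMaximal_rpow_le (ha : 0 < a) {g : EuclideanSpace ℝ (Fin n) × ℝ → ℝ≥0∞}
    (hg : Measurable g) {p : ℝ} (hp : 1 < p) :
    ∫⁻ z, cylMaximal a g z ^ p ≤
      2 ^ (p - 1) * (2 * ENNReal.ofReal (vitaliConst a ^ ((n : ℝ) + 2 * a))) *
        ENNReal.ofReal (p / (p - 1)) * ∫⁻ w, g w ^ p :=
  lintegral_rpow_le_of_meas_lt_le (measurable_cylMaximal ha hg) hg hp fun _ ht =>
    volume_lt_cylMaximal_le_setLIntegral ha hg (by simpa using ht) ENNReal.ofReal_ne_top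

end Maximal

section Morrey

variable {n : ℕ} {a p lam : ℝ}

def morreyModulus (a p lam : ℝ) {n : ℕ} (g : EuclideanSpace ℝ (Fin n) × ℝ → ℝ≥0∞) : ℝ≥0∞ :=
  ⨆ (r : ℝ) (_ : 0 < r) (z : EuclideanSpace ℝ (Fin n) × ℝ),
    ENNReal.ofReal (r ^ (lam - ((n : ℝ) + 2 * a))) * ∫⁻ w in Qcyl a r z, g w ^ p

lemma morreyNorm_eq (hp : 0 ≤ p) (f : EuclideanSpace ℝ (Fin n) × ℝ → ℝ) :
    morreyNorm a p lam f = morreyModulus a p lam (fun w => ENNReal.ofReal |f w|) ^ (1 / p) := by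
  simp_rw [morreyNorm, morreyModulus, ENNReal.ofReal_rpow_of_nonneg (abs_nonneg _) hp]

lemma ofReal_rpow_sub_mul_ofReal_rpow_sub {r : ℝ} (hr : 0 < r) (x y : ℝ) :
    ENNReal.ofReal (r ^ (x - y)) * ENNReal.ofReal (r ^ (y - x)) = 1 := by
  rw [← ENNReal.ofReal_mul (by positivity), ← Real.rpow_add hr, sub_add_sub_cancel, sub_self,
    Real.rpow_zero, ENNReal.ofReal_one]

lemma setLIntegral_rpow_le_morreyModulus {r : ℝ} (hr : 0 < r)
    (g : EuclideanSpace ℝ (Fin n) × ℝ → ℝ≥0∞) (z : EuclideanSpace ℝ (Fin n) × ℝ) :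
    ∫⁻ w in Qcyl a r z, g w ^ p ≤
      ENNReal.ofReal (r ^ ((n : ℝ) + 2 * a - lam)) * morreyModulus a p lam g := by
  have hle : ENNReal.ofReal (r ^ (lam - ((n : ℝ) + 2 * a))) * ∫⁻ w in Qcyl a r z, g w ^ p ≤
      morreyModulus a p lam g :=
    le_iSup₂_of_le (f := fun r (_ : 0 < r) => ⨆ z : EuclideanSpace ℝ (Fin n) × ℝ,
      ENNReal.ofReal (r ^ (lam - ((n : ℝ) + 2 * a))) * ∫⁻ w in Qcyl a r z, g w ^ p) r hr
      (le_iSup_of_le z le_rfl)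
  calc ∫⁻ w in Qcyl a r z, g w ^ p = ENNReal.ofReal (r ^ ((n : ℝ) + 2 * a - lam)) *
        (ENNReal.ofReal (r ^ (lam - ((n : ℝ) + 2 * a))) * ∫⁻ w in Qcyl a r z, g w ^ p) := by
        rw [← mul_assoc, ofReal_rpow_sub_mul_ofReal_rpow_sub hr, one_mul]
    _ ≤ _ := by gcongr

lemma lintegral_indicator_Qcyl_rpow_le_morreyModulus (ha : 0 < a) (hp : 0 < p) {r : ℝ}
    (hr : 0 < r) (g : EuclideanSpace ℝ (Fin n) × ℝ → ℝ≥0∞) (z : EuclideanSpace ℝ (Fin n) × ℝ) :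
    ∫⁻ w, (Qcyl a r z).indicator g w ^ p ≤
      ENNReal.ofReal (r ^ ((n : ℝ) + 2 * a - lam)) * morreyModulus a p lam g := by
  have hind : ∀ w, (Qcyl a r z).indicator g w ^ p = (Qcyl a r z).indicator (g · ^ p) w :=
    fun w => by by_cases hw : w ∈ Qcyl a r z <;> simp [hw, ENNReal.zero_rpow_of_pos hp]
  rw [lintegral_congr hind, lintegral_indicator (measurableSet_Qcyl ha r z)]
  exact setLIntegral_rpow_le_morreyModulus hr g z

lemma morreyModulus_le_of_forall {g : EuclideanSpace ℝ (Fin n) × ℝ → ℝ≥0∞} {K S : ℝ≥0∞}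
    (h : ∀ r, 0 < r → ∀ z, ∫⁻ w in Qcyl a r z, g w ^ p ≤
      K * ENNReal.ofReal (r ^ ((n : ℝ) + 2 * a - lam)) * S) :
    morreyModulus a p lam g ≤ K * S :=
  iSup₂_le fun r hr => iSup_le fun z => calc
    _ ≤ ENNReal.ofReal (r ^ (lam - ((n : ℝ) + 2 * a))) *
          (K * ENNReal.ofReal (r ^ ((n : ℝ) + 2 * a - lam)) * S) := by gcongr; exact h r hr z
    _ = K * S := by
        rw [mul_comm K, mul_assoc, ← mul_assoc, ofReal_rpow_sub_mul_ofReal_rpow_sub hr, one_mul]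

lemma inv_volume_Qcyl_mul_ofReal_rpow_le (ha : 0 < a) (hlam : 0 ≤ lam) {r q : ℝ} (hr : 0 < r)
    (hrq : r ≤ q) (z w : EuclideanSpace ℝ (Fin n) × ℝ) :
    (volume (Qcyl a q w))⁻¹ * ENNReal.ofReal (q ^ ((n : ℝ) + 2 * a - lam)) ≤
      (volume (Qcyl a r z))⁻¹ * ENNReal.ofReal (r ^ ((n : ℝ) + 2 * a - lam)) := by
  have key : ∀ ρ : ℝ, 0 < ρ → ∀ y : EuclideanSpace ℝ (Fin n) × ℝ,
      (volume (Qcyl a ρ y))⁻¹ * ENNReal.ofReal (ρ ^ ((n : ℝ) + 2 * a - lam)) =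
        ENNReal.ofReal (ρ ^ (-lam)) * (volume (Qcyl a 1 (0 : EuclideanSpace ℝ (Fin n) × ℝ)))⁻¹ :=
    fun ρ hρ y => by
      rw [volume_Qcyl ha hρ, ENNReal.mul_inv (.inl (by positivity)) (.inl ENNReal.ofReal_ne_top),
        ← ENNReal.ofReal_inv_of_pos (by positivity), ← Real.rpow_neg hρ.le, mul_right_comm,
        ← ENNReal.ofReal_mul (by positivity), ← Real.rpow_add hρ]
      ring_nf
  rw [key q (hr.trans_le hrq), key r hr]
  gcongr ?_ * _
  exact ENNReal.ofReal_le_ofReal (Real.rpow_le_rpow_of_nonpos hr hrq (neg_nonpos.2 hlam))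

lemma setLAverage_Qcyl_le_morreyModulus (ha : 0 < a) (hp : 1 < p) (hlam : 0 ≤ lam)
    {g : EuclideanSpace ℝ (Fin n) × ℝ → ℝ≥0∞} (hg : Measurable g) {r q : ℝ} (hr : 0 < r)
    (hrq : r ≤ q) (z w : EuclideanSpace ℝ (Fin n) × ℝ) :
    ⨍⁻ x in Qcyl a q w, g x ∂volume ≤ ((volume (Qcyl a r z))⁻¹ *
      ENNReal.ofReal (r ^ ((n : ℝ) + 2 * a - lam)) * morreyModulus a p lam g) ^ (1 / p) := by
  have hq : 0 < q := hr.trans_le hrq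
  refine (laverage_le_rpow_laverage_rpow hg.aemeasurable hp ?_ ?_).trans ?_
  · rw [Measure.restrict_apply_univ]; exact volume_Qcyl_ne_zero ha hq w
  · rw [Measure.restrict_apply_univ]; exact volume_Qcyl_ne_top ha hq w
  gcongr
  rw [setLAverage_eq, ENNReal.div_eq_inv_mul]
  calc (volume (Qcyl a q w))⁻¹ * ∫⁻ x in Qcyl a q w, g x ^ p
      ≤ (volume (Qcyl a q w))⁻¹ *
          (ENNReal.ofReal (q ^ ((n : ℝ) + 2 * a - lam)) * morreyModulus a p lam g) := by
        gcongr; exact setLIntegral_rpow_le_morreyModulus hq g w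
    _ ≤ _ := by
        rw [← mul_assoc]
        gcongr ?_ * _
        exact inv_volume_Qcyl_mul_ofReal_rpow_le ha hlam hr hrq z w

/-- Cylinders of radius at most `r` around `w` lie in the enlarged cylinder, where the indicator
vanishes; larger ones are handled by Hölder and the Morrey condition. -/
lemma cylMaximal_indicator_compl_le (ha : 0 < a) (hp : 1 < p) (hlam : 0 ≤ lam)
    {g : EuclideanSpace ℝ (Fin n) × ℝ → ℝ≥0∞} (hg : Measurable g) {r : ℝ} (hr : 0 < r)
    {z w : EuclideanSpace ℝ (Fin n) × ℝ} (hw : w ∈ Qcyl a r z) :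
    cylMaximal a ((Qcyl a (2 * 2 ^ (1 / (2 * a)) * r) z)ᶜ.indicator g) w ≤
      ((volume (Qcyl a r z))⁻¹ * ENNReal.ofReal (r ^ ((n : ℝ) + 2 * a - lam)) *
        morreyModulus a p lam g) ^ (1 / p) := by
  refine iSup₂_le fun q _ => ?_
  rcases le_or_gt (q : ℝ) r with hqr | hrq
  · have hsub : Qcyl a q w ⊆ Qcyl a (2 * 2 ^ (1 / (2 * a)) * r) z :=
      (Qcyl_subset_Qcyl_of_mem ha hw).trans (Qcyl_mono (by nlinarith [
        (by positivity : (0 : ℝ) < 2 ^ (1 / (2 * a)))]) z)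
    rw [setLAverage_congr_fun (measurableSet_Qcyl ha _ w)
      fun x hx => indicator_of_notMem (notMem_compl_iff.2 (hsub hx)) g]
    simp
  · refine (laverage_mono_ae (ae_of_all _ fun x => ?_)).trans
      (setLAverage_Qcyl_le_morreyModulus ha hp hlam hg hr hrq.le z w)
    exact indicator_le_self _ g x

lemma cylMaximal_le_indicator_add (ha : 0 < a) (hp : 1 < p) (hlam : 0 ≤ lam)
    {g : EuclideanSpace ℝ (Fin n) × ℝ → ℝ≥0∞} (hg : Measurable g) {r : ℝ} (hr : 0 < r)
    {z w : EuclideanSpace ℝ (Fin n) × ℝ} (hw : w ∈ Qcyl a r z) :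
    cylMaximal a g w ≤ cylMaximal a ((Qcyl a (2 * 2 ^ (1 / (2 * a)) * r) z).indicator g) w +
      ((volume (Qcyl a r z))⁻¹ * ENNReal.ofReal (r ^ ((n : ℝ) + 2 * a - lam)) *
        morreyModulus a p lam g) ^ (1 / p) := by
  set E := Qcyl a (2 * 2 ^ (1 / (2 * a)) * r) z
  calc cylMaximal a g w = cylMaximal a (E.indicator g + Eᶜ.indicator g) w := by
        rw [indicator_self_add_compl]
    _ ≤ cylMaximal a (E.indicator g) w + cylMaximal a (Eᶜ.indicator g) w :=
        cylMaximal_add_le (hg.indicator (measurableSet_Qcyl ha _ z)) _ w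
    _ ≤ _ := by gcongr; exact cylMaximal_indicator_compl_le ha hp hlam hg hr hw

theorem setLIntegral_cylMaximal_rpow_le (ha : 0 < a) (hp : 1 < p) (hlam : 0 ≤ lam) {A : ℝ≥0∞}
    (hA : ∀ g : EuclideanSpace ℝ (Fin n) × ℝ → ℝ≥0∞, Measurable g →
      ∫⁻ z, cylMaximal a g z ^ p ≤ A * ∫⁻ z, g z ^ p)
    {g : EuclideanSpace ℝ (Fin n) × ℝ → ℝ≥0∞} (hg : Measurable g) {r : ℝ} (hr : 0 < r)
    (z : EuclideanSpace ℝ (Fin n) × ℝ) :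
    ∫⁻ w in Qcyl a r z, cylMaximal a g w ^ p ≤
      2 ^ (p - 1) * (A * ENNReal.ofReal ((2 * 2 ^ (1 / (2 * a))) ^ ((n : ℝ) + 2 * a - lam)) + 1) *
        ENNReal.ofReal (r ^ ((n : ℝ) + 2 * a - lam)) * morreyModulus a p lam g := by
  set d := (n : ℝ) + 2 * a - lam
  set E := Qcyl a (2 * 2 ^ (1 / (2 * a)) * r) z
  set S := morreyModulus a p lam g
  set V := ((volume (Qcyl a r z))⁻¹ * ENNReal.ofReal (r ^ d) * S) ^ (1 / p)
  have hE : MeasurableSet E := measurableSet_Qcyl ha _ z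
  have hpt : ∀ w ∈ Qcyl a r z,
      cylMaximal a g w ^ p ≤ 2 ^ (p - 1) * (cylMaximal a (E.indicator g) w ^ p + V ^ p) :=
    fun w hw => (ENNReal.rpow_le_rpow (cylMaximal_le_indicator_add ha hp hlam hg hr hw)
      (by linarith)).trans (ENNReal.rpow_add_le_mul_rpow_add_rpow _ _ hp.le)
  have hV : V ^ p * volume (Qcyl a r z) = ENNReal.ofReal (r ^ d) * S := by
    rw [← ENNReal.rpow_mul, one_div_mul_cancel (by linarith), ENNReal.rpow_one, mul_comm,
      ← mul_assoc, ← mul_assoc, ENNReal.mul_inv_cancel (volume_Qcyl_ne_zero ha hr z)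
      (volume_Qcyl_ne_top ha hr z), one_mul]
  have hnear : ∫⁻ w, E.indicator g w ^ p ≤
      ENNReal.ofReal ((2 * 2 ^ (1 / (2 * a))) ^ d) * ENNReal.ofReal (r ^ d) * S := by
    rw [← ENNReal.ofReal_mul (by positivity), ← Real.mul_rpow (by positivity) hr.le]
    exact lintegral_indicator_Qcyl_rpow_le_morreyModulus ha (by linarith) (by positivity) g z
  calc ∫⁻ w in Qcyl a r z, cylMaximal a g w ^ p
      ≤ ∫⁻ w in Qcyl a r z, 2 ^ (p - 1) * (cylMaximal a (E.indicator g) w ^ p + V ^ p) :=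
        setLIntegral_mono' (measurableSet_Qcyl ha r z) hpt
    _ = 2 ^ (p - 1) * ((∫⁻ w in Qcyl a r z, cylMaximal a (E.indicator g) w ^ p) +
          V ^ p * volume (Qcyl a r z)) := by
        rw [lintegral_const_mul' _ _ (ENNReal.rpow_ne_top_of_nonneg (by linarith)
          ENNReal.ofNat_ne_top), lintegral_add_right _ measurable_const, setLIntegral_const]
    _ ≤ 2 ^ (p - 1) * (A * (ENNReal.ofReal ((2 * 2 ^ (1 / (2 * a))) ^ d) *
          ENNReal.ofReal (r ^ d) * S) + ENNReal.ofReal (r ^ d) * S) := by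
        rw [hV]
        gcongr
        exact (setLIntegral_le_lintegral _ _).trans ((hA _ (hg.indicator hE)).trans
          (by gcongr))
    _ = _ := by ring

theorem exists_morreyModulus_cylMaximal_le (ha : 0 < a) (hp : 1 < p) (hlam : 0 ≤ lam) :
    ∃ C : ℝ≥0∞, C ≠ ∞ ∧ ∀ g : EuclideanSpace ℝ (Fin n) × ℝ → ℝ≥0∞, Measurable g →
      morreyModulus a p lam (cylMaximal a g) ≤ C * morreyModulus a p lam g := by
  exact ⟨_, by finiteness, fun g hg => morreyModulus_le_of_forall fun r hr z =>
    setLIntegral_cylMaximal_rpow_le ha hp hlam (fun g hg => lintegral_cylMaximal_rpow_le ha hg hp)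
      hg hr z⟩

lemma morreyModulus_le_of_le_const_mul (hp : 0 ≤ p) {g g' : EuclideanSpace ℝ (Fin n) × ℝ → ℝ≥0∞}
    {c : ℝ≥0∞} (hc : c ≠ ∞) (h : ∀ w, g w ≤ c * g' w) :
    morreyModulus a p lam g ≤ c ^ p * morreyModulus a p lam g' :=
  morreyModulus_le_of_forall fun r hr z => calc
    ∫⁻ w in Qcyl a r z, g w ^ p ≤ ∫⁻ w in Qcyl a r z, c ^ p * g' w ^ p :=
        lintegral_mono fun w => by rw [← ENNReal.mul_rpow_of_nonneg _ _ hp]; gcongr; exact h w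
    _ = c ^ p * ∫⁻ w in Qcyl a r z, g' w ^ p :=
        lintegral_const_mul' _ _ (ENNReal.rpow_ne_top_of_nonneg hp hc)
    _ ≤ _ := by
        rw [mul_assoc]
        gcongr
        exact setLIntegral_rpow_le_morreyModulus hr g' z

theorem exists_morreyModulus_maxOp_le (ha : 0 < a) (hp : 1 < p) (hlam : 0 ≤ lam) :
    ∃ K : ℝ≥0∞, K ≠ ∞ ∧ ∀ f : EuclideanSpace ℝ (Fin n) × ℝ → ℝ, Measurable f →
      morreyModulus a p lam (fun w => ENNReal.ofReal |maxOp a 0 f w|) ≤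
        K * morreyModulus a p lam (fun w => ENNReal.ofReal |f w|) := by
  obtain ⟨C, hC, hM⟩ := exists_morreyModulus_cylMaximal_le (n := n) ha hp hlam
  refine ⟨ENNReal.ofReal (2 ^ ((n : ℝ) + 2 * a)) ^ p * C,
    ENNReal.mul_ne_top (ENNReal.rpow_ne_top_of_nonneg (by linarith) ENNReal.ofReal_ne_top) hC,
    fun f hf => ?_⟩
  calc _ ≤ ENNReal.ofReal (2 ^ ((n : ℝ) + 2 * a)) ^ p *
        morreyModulus a p lam (cylMaximal a fun w => ENNReal.ofReal |f w|) :=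
        morreyModulus_le_of_le_const_mul (by linarith) ENNReal.ofReal_ne_top fun w => by
          rw [abs_of_nonneg (maxOp_nonneg a 0 f w)]
          exact ofReal_maxOp_le ha f w
    _ ≤ _ := by
        rw [mul_assoc]
        gcongr
        exact hM _ hf.abs.ennreal_ofReal

end Morrey

theorem maximal_bounded_on_morrey_general (n : ℕ) (a p lam : ℝ) (ha₀ : 0 < a)
    (hp₀ : 1 < p) (hlam₀ : 0 < lam) :
    ∃ C : ℝ, 0 < C ∧ ∀ f : EuclideanSpace ℝ (Fin n) × ℝ → ℝ,
      Measurable f → morreyNorm a p lam f < ⊤ →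
        morreyNorm a p lam (maxOp a 0 f) ≤ ENNReal.ofReal C * morreyNorm a p lam f := by
  have hp : 0 < p := by linarith
  obtain ⟨K, hK, hmod⟩ := exists_morreyModulus_maxOp_le (n := n) ha₀ hp₀ hlam₀.le
  refine ⟨K.toReal ^ (1 / p) + 1, by positivity, fun f hf _ => ?_⟩
  rw [morreyNorm_eq hp.le, morreyNorm_eq hp.le]
  calc _ ≤ (K * morreyModulus a p lam (fun w => ENNReal.ofReal |f w|)) ^ (1 / p) := by
        gcongr
        exact hmod f hf
    _ = K ^ (1 / p) * morreyModulus a p lam (fun w => ENNReal.ofReal |f w|) ^ (1 / p) :=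
        ENNReal.mul_rpow_of_nonneg _ _ (by positivity)
    _ ≤ _ := by
        gcongr
        rw [← ENNReal.ofReal_toReal (ENNReal.rpow_ne_top_of_nonneg (by positivity) hK),
          ← ENNReal.toReal_rpow]
        exact ENNReal.ofReal_le_ofReal (le_add_of_nonneg_right zero_le_one)

/-- the fractional parabolic maximal operator `M₀` is bounded on the
fractional parabolic Morrey space `M^{p,λ}(ℝ^{n+1})`. -/
theorem maximal_bounded_on_morrey (n : ℕ) (a p lam : ℝ) (ha₀ : 0 < a) (ha₁ : a ≤ 1)
    (hp₀ : 1 < p) (hlam₀ : 0 < lam) (hlam₁ : lam ≤ (n : ℝ) + 2 * a) :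
    ∃ C : ℝ, 0 < C ∧ ∀ f : EuclideanSpace ℝ (Fin n) × ℝ → ℝ,
      Measurable f → morreyNorm a p lam f < ⊤ →
        morreyNorm a p lam (maxOp a 0 f) ≤ ENNReal.ofReal C * morreyNorm a p lam f :=
  maximal_bounded_on_morrey_general n a p lam ha₀ hp₀ hlam₀
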